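/- Let A be a Banach algebra, B a Banach A-bimodule, and n ≥ 1. If every continuous derivation from A into the (n+2)-th dual B^(n+2) is inner, then every continuous derivation from A into the n-th dual B^(n) is inner. -/

import Mathlib

open ContinuousLinearMap NormedSpace

noncomputable section

/-- The topological dual `E →L[𝕜] 𝕜` (formerly `NormedSpace.Dual` in Mathlib). -/
def Dual (𝕜 : Type) (E : Type) [NontriviallyNormedField 𝕜] [SeminormedAddCommGroup E]
    [NormedSpace 𝕜 E] : Type :=
  E →L[𝕜] 𝕜

instance (𝕜 : Type) (E : Type) [NontriviallyNormedField 𝕜] [SeminormedAddCommGroup E]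
    [NormedSpace 𝕜 E] : SeminormedAddCommGroup (Dual 𝕜 E) :=
  inferInstanceAs (SeminormedAddCommGroup (E →L[𝕜] 𝕜))

instance (𝕜 : Type) (E : Type) [NontriviallyNormedField 𝕜] [NormedAddCommGroup E]
    [NormedSpace 𝕜 E] : NormedAddCommGroup (Dual 𝕜 E) :=
  inferInstanceAs (NormedAddCommGroup (E →L[𝕜] 𝕜))

instance (𝕜 : Type) (E : Type) [NontriviallyNormedField 𝕜] [SeminormedAddCommGroup E]
    [NormedSpace 𝕜 E] : NormedSpace 𝕜 (Dual 𝕜 E) :=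
  inferInstanceAs (NormedSpace 𝕜 (E →L[𝕜] 𝕜))

instance (𝕜 : Type) (E : Type) [NontriviallyNormedField 𝕜] [SeminormedAddCommGroup E]
    [NormedSpace 𝕜 E] : FunLike (Dual 𝕜 E) E 𝕜 :=
  inferInstanceAs (FunLike (E →L[𝕜] 𝕜) E 𝕜)

instance (𝕜 : Type) (E : Type) [NontriviallyNormedField 𝕜] [SeminormedAddCommGroup E]
    [NormedSpace 𝕜 E] : ContinuousLinearMapClass (Dual 𝕜 E) 𝕜 E 𝕜 :=
  inferInstanceAs (ContinuousLinearMapClass (E →L[𝕜] 𝕜) 𝕜 E 𝕜)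

section Defs

variable {X Y Z W : Type} [NormedAddCommGroup X] [NormedSpace ℝ X]
  [NormedAddCommGroup Y] [NormedSpace ℝ Y] [NormedAddCommGroup Z] [NormedSpace ℝ Z]
  [NormedAddCommGroup W] [NormedSpace ℝ W]

/-- The first adjoint `m^*` of a bounded bilinear map `m : X × Y → Z`,
as a map `Z^* × X → Y^*`, `⟨m^*(z',x), y⟩ = ⟨z', m(x,y)⟩`. -/
def adj1 (m : X →L[ℝ] Y →L[ℝ] Z) :
    Dual ℝ Z →L[ℝ] X →L[ℝ] Dual ℝ Y :=
  (((ContinuousLinearMap.compL ℝ X (Y →L[ℝ] Z) (Dual ℝ Y)).flip m).comp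
    (ContinuousLinearMap.compL ℝ Y Z ℝ))

@[simp] lemma adj1_apply (m : X →L[ℝ] Y →L[ℝ] Z) (z' : Dual ℝ Z) (x : X) (y : Y) :
    adj1 m z' x y = z' (m x y) := rfl

/-- The first (left) Arens extension `m^{***} : X^{**} × Y^{**} → Z^{**}` of a
bounded bilinear map `m : X × Y → Z`. -/
def arens (m : X →L[ℝ] Y →L[ℝ] Z) :
    Dual ℝ (Dual ℝ X) →L[ℝ] Dual ℝ (Dual ℝ Y) →L[ℝ] Dual ℝ (Dual ℝ Z) :=
  adj1 (adj1 (adj1 m))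

/-- The adjoint (dual map) of a bounded linear map. -/
def dualMap' (D : X →L[ℝ] Y) : Dual ℝ Y →L[ℝ] Dual ℝ X :=
  (ContinuousLinearMap.compL ℝ X Y ℝ).flip D

@[simp] lemma dualMap'_apply (D : X →L[ℝ] Y) (g : Dual ℝ Y) (x : X) :
    dualMap' D g x = g (D x) := rfl

/-- The second adjoint `D'' : X^{**} → Y^{**}` of a bounded linear map. -/
def bidualMap (D : X →L[ℝ] Y) : Dual ℝ (Dual ℝ X) →L[ℝ] Dual ℝ (Dual ℝ Y) :=
  dualMap' (dualMap' D)

/-- Given an action `t : A × X → X`, the transposed action on the dual `X^*`: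
`(dualAct t) a f = f ∘ (t a)`. -/
def dualAct (t : W →L[ℝ] X →L[ℝ] X) : W →L[ℝ] Dual ℝ X →L[ℝ] Dual ℝ X :=
  ((ContinuousLinearMap.compL ℝ X X ℝ).flip).comp t

@[simp] lemma dualAct_apply (t : W →L[ℝ] X →L[ℝ] X) (a : W) (f : Dual ℝ X) (x : X) :
    dualAct t a f x = f (t a x) := rfl

/-- `D : A → X` is a derivation with respect to the multiplication `mul'` on `A`
and the left action `l` and right action `r` (`r a x` means `x · a`) of `A` on `X`. -/
def IsDer {A' : Type} [NormedAddCommGroup A'] [NormedSpace ℝ A']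
    (mul' : A' →L[ℝ] A' →L[ℝ] A') (l r : A' →L[ℝ] X →L[ℝ] X) (D : A' →L[ℝ] X) : Prop :=
  ∀ a b : A', D (mul' a b) = l a (D b) + r b (D a)

/-- `D : A → X` is an inner derivation: `D a = a·x - x·a` for some `x`. -/
def IsInner {A' : Type} [NormedAddCommGroup A'] [NormedSpace ℝ A']
    (l r : A' →L[ℝ] X →L[ℝ] X) (D : A' →L[ℝ] X) : Prop :=
  ∃ x : X, ∀ a : A', D a = l a x - r a x

/-- The bimodule axioms for actions `l`, `r` of an algebra with multiplication `mul'`. -/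
def IsBimod {A' : Type} [NormedAddCommGroup A'] [NormedSpace ℝ A']
    (mul' : A' →L[ℝ] A' →L[ℝ] A') (l r : A' →L[ℝ] X →L[ℝ] X) : Prop :=
  (∀ a b x, l (mul' a b) x = l a (l b x)) ∧
  (∀ a b x, r (mul' a b) x = r b (r a x)) ∧
  (∀ a b x, l a (r b x) = r b (l a x))

/-- weak*-to-weak* continuity of a map between dual spaces. -/
def WStarCont (f : Dual ℝ X → Dual ℝ Y) : Prop :=
  ∀ y : Y, Continuous fun φ : WeakDual ℝ X => f φ y

end Defs

/-- A packaged Banach `A`-bimodule (used to form iterated duals). -/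
structure ModPk (A : Type) [NormedAddCommGroup A] [NormedSpace ℝ A] : Type 1 where
  X : Type
  [grp : NormedAddCommGroup X]
  [mod : NormedSpace ℝ X]
  l : A →L[ℝ] X →L[ℝ] X
  r : A →L[ℝ] X →L[ℝ] X

attribute [instance] ModPk.grp ModPk.mod

variable {A : Type} [NormedAddCommGroup A] [NormedSpace ℝ A]

/-- The canonical dual of a packaged bimodule. -/
def ModPk.dual (P : ModPk A) : ModPk A :=
  ⟨Dual ℝ P.X, dualAct P.r, dualAct P.l⟩

/-- The `n`-th iterated dual of a packaged bimodule. -/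
def ModPk.iter (P : ModPk A) : ℕ → ModPk A
  | 0 => P
  | n+1 => (P.iter n).dual

/-- A "level": an algebra (given by its bilinear multiplication) together with a bimodule. -/
structure Lvl : Type 1 where
  Alg : Type
  [g1 : NormedAddCommGroup Alg]
  [m1 : NormedSpace ℝ Alg]
  Mod : Type
  [g2 : NormedAddCommGroup Mod]
  [m2 : NormedSpace ℝ Mod]
  mul : Alg →L[ℝ] Alg →L[ℝ] Alg
  l : Alg →L[ℝ] Mod →L[ℝ] Mod
  r : Alg →L[ℝ] Mod →L[ℝ] Mod

attribute [instance] Lvl.g1 Lvl.m1 Lvl.g2 Lvl.m2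

/-- Passing to second duals: `A^{**}` with the first Arens product, acting on `B^{**}`
via the Arens extensions `π_ℓ^{***}` and `π_r^{***}` of the module actions. -/
def Lvl.double (Q : Lvl) : Lvl where
  Alg := Dual ℝ (Dual ℝ Q.Alg)
  Mod := Dual ℝ (Dual ℝ Q.Mod)
  mul := arens Q.mul
  l := arens Q.l
  r := (arens Q.r.flip).flip

/-- Iterated even duals: `Lvl.iter Q n` is the level `(A^{(2n)}, B^{(2n)})`. -/
def Lvl.iter (Q : Lvl) : ℕ → Lvl
  | 0 => Q
  | n+1 => (Q.iter n).double

/-- The canonical embedding `A → A^{(2n)}`. -/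
def Lvl.embA (Q : Lvl) : (n : ℕ) → Q.Alg →L[ℝ] (Q.iter n).Alg
  | 0 => ContinuousLinearMap.id ℝ _
  | n+1 => (inclusionInDoubleDual ℝ ((Q.iter n).Alg)).comp (Q.embA n)

/-- The canonical embedding `B → B^{(2n)}`. -/
def Lvl.embM (Q : Lvl) : (n : ℕ) → Q.Mod →L[ℝ] (Q.iter n).Mod
  | 0 => ContinuousLinearMap.id ℝ _
  | n+1 => (inclusionInDoubleDual ℝ ((Q.iter n).Mod)).comp (Q.embM n)

/-- The left-topological-center condition `Z^ℓ_{A^{(2n+2)}}(B^{(2n+2)}) = B^{(2n+2)}`,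
stated at the double of a level `Q`: for each `b` in the second-dual module, the map
`a ↦ b·a` is weak*-to-weak* continuous. -/
def Lvl.doubleZl (Q : Lvl) : Prop :=
  ∀ b : (Q.double).Mod, WStarCont (X := Dual ℝ Q.Alg) (Y := Dual ℝ Q.Mod)
    (fun a => (Q.double).r a b)

structure ModPk.IsHom (M N : ModPk A) (φ : M.X →L[ℝ] N.X) : Prop where
  map_l : ∀ a x, φ (M.l a x) = N.l a (φ x)
  map_r : ∀ a x, φ (M.r a x) = N.r a (φ x)

namespace ModPk

variable {M N : ModPk A}

lemma IsHom.dualMap' {φ : M.X →L[ℝ] N.X} (hφ : M.IsHom N φ) :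
    N.dual.IsHom M.dual (_root_.dualMap' φ) where
  map_l a f := ContinuousLinearMap.ext fun x =>
    congrArg (show Dual ℝ N.X from f) (hφ.map_r a x).symm
  map_r a f := ContinuousLinearMap.ext fun x =>
    congrArg (show Dual ℝ N.X from f) (hφ.map_l a x).symm

lemma isHom_inclusionInDoubleDual (M : ModPk A) :
    M.IsHom M.dual.dual (inclusionInDoubleDual ℝ M.X) where
  map_l _ _ := rfl
  map_r _ _ := rfl

lemma dualMap'_inclusionInDoubleDual_apply (M : ModPk A) (f : M.dual.X) :
    _root_.dualMap' (inclusionInDoubleDual ℝ M.X) (inclusionInDoubleDual ℝ M.dual.X f) = f :=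
  rfl

variable (mul' : A →L[ℝ] A →L[ℝ] A)

lemma IsHom.isDer_comp {φ : M.X →L[ℝ] N.X} (hφ : M.IsHom N φ) {D : A →L[ℝ] M.X}
    (hD : IsDer mul' M.l M.r D) : IsDer mul' N.l N.r (φ.comp D) := by
  intro a b
  simp only [ContinuousLinearMap.comp_apply, hD a b, map_add, hφ.map_l, hφ.map_r]

lemma IsHom.isInner_comp {φ : M.X →L[ℝ] N.X} (hφ : M.IsHom N φ) {D : A →L[ℝ] M.X}
    (hD : IsInner M.l M.r D) : IsInner N.l N.r (φ.comp D) := by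
  obtain ⟨x, hx⟩ := hD
  exact ⟨φ x, fun a => by rw [ContinuousLinearMap.comp_apply, hx a, map_sub, hφ.map_l, hφ.map_r]⟩

lemma isInner_of_retract {i : M.X →L[ℝ] N.X} {P : N.X →L[ℝ] M.X} (hi : M.IsHom N i)
    (hP : N.IsHom M P) (hPi : ∀ x, P (i x) = x)
    (H : ∀ D : A →L[ℝ] N.X, IsDer mul' N.l N.r D → IsInner N.l N.r D)
    (D : A →L[ℝ] M.X) (hD : IsDer mul' M.l M.r D) : IsInner M.l M.r D := by
  have hPiD : P.comp (i.comp D) = D := ContinuousLinearMap.ext fun a => hPi (D a)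
  simpa only [hPiD] using hP.isInner_comp (H _ (hi.isDer_comp mul' hD))

/-- `M*` is a bimodule retract of `M***`: embed by `ι_{M*}`, project by `(ι_M)*`. -/
lemma isInner_dual_of_isInner_dual_dual_dual (M : ModPk A)
    (H : ∀ D : A →L[ℝ] M.dual.dual.dual.X,
      IsDer mul' M.dual.dual.dual.l M.dual.dual.dual.r D →
      IsInner M.dual.dual.dual.l M.dual.dual.dual.r D)
    (D : A →L[ℝ] M.dual.X) (hD : IsDer mul' M.dual.l M.dual.r D) :
    IsInner M.dual.l M.dual.r D :=
  isInner_of_retract mul' M.dual.isHom_inclusionInDoubleDual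
    M.isHom_inclusionInDoubleDual.dualMap' M.dualMap'_inclusionInDoubleDual_apply H D hD

end ModPk

theorem stmt0 (A : Type) [NormedRing A] [NormedAlgebra ℝ A]
    (B : Type) [NormedAddCommGroup B] [NormedSpace ℝ B]
    (l r : A →L[ℝ] B →L[ℝ] B)
    (n : ℕ) (hn : 1 ≤ n)
    (H : ∀ D : A →L[ℝ] ((ModPk.mk B l r).iter (n+2)).X,
      IsDer (ContinuousLinearMap.mul ℝ A) ((ModPk.mk B l r).iter (n+2)).l
        ((ModPk.mk B l r).iter (n+2)).r D →
      IsInner ((ModPk.mk B l r).iter (n+2)).l ((ModPk.mk B l r).iter (n+2)).r D) :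
    ∀ D : A →L[ℝ] ((ModPk.mk B l r).iter n).X,
      IsDer (ContinuousLinearMap.mul ℝ A) ((ModPk.mk B l r).iter n).l
        ((ModPk.mk B l r).iter n).r D →
      IsInner ((ModPk.mk B l r).iter n).l ((ModPk.mk B l r).iter n).r D := by
  obtain ⟨m, rfl⟩ : ∃ m, n = m + 1 := ⟨n - 1, (Nat.sub_add_cancel hn).symm⟩
  exact ((ModPk.mk B l r).iter m).isInner_dual_of_isInner_dual_dual_dual _ H
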